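/- arXiv:1812.08422 — 4 statements merged into one kernel-verified Lean document; each statement's English description precedes it below -/
import Mathlib

section
/- Let 1 ≤ p < ∞ and let w be a weight in the discrete Muckenhoupt class A_p(ℕ). Then the subsampled weights w_e(n) = w(2n) and w_o(n) = w(2n+1) also belong to A_p(ℕ). -/
open Real MeasureTheory

/-- Jacobi polynomial via Rodrigues' formula. -/
noncomputable def jacobiP (a b : ℝ) (n : ℕ) (z : ℝ) : ℝ :=
  ((-1 : ℝ) ^ n / ((2 : ℝ) ^ n * (Nat.factorial n : ℝ))) * (1 - z) ^ (-a) * (1 + z) ^ (-b) *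
    iteratedDeriv n (fun t : ℝ => (1 - t) ^ (a + (n : ℝ)) * (1 + t) ^ (b + (n : ℝ))) z

/-- Normalization constants. -/
noncomputable def jacobiw (a b : ℝ) (n : ℕ) : ℝ :=
  if n = 0 then Real.sqrt (Real.Gamma (a + b + 2) / (Real.Gamma (a + 1) * Real.Gamma (b + 1)))
  else Real.sqrt ((2 * (n : ℝ) + a + b + 1) * Real.Gamma ((n : ℝ) + 1) *
    Real.Gamma ((n : ℝ) + a + b + 1) / (Real.Gamma ((n : ℝ) + a + 1) * Real.Gamma ((n : ℝ) + b + 1)))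

/-- Normalized Jacobi functions on (0, π). -/
noncomputable def jacobiFn (a b : ℝ) (n : ℕ) (x : ℝ) : ℝ :=
  jacobiw a b n * Real.sin (x / 2) ^ (a + 1 / 2) * Real.cos (x / 2) ^ (b + 1 / 2) *
    jacobiP a b n (Real.cos x)

/-- Transplantation kernel `K_{α,β}^{γ,δ}(n,m)`. -/
noncomputable def jacobiK (α β γ δ : ℝ) (n m : ℕ) : ℝ :=
  ∫ x in (0 : ℝ)..Real.pi, jacobiFn γ δ n x * jacobiFn α β m x

/-- Discrete Muckenhoupt class `A_p(ℕ)`, `1 < p < ∞`. -/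
def IsDiscreteAp (p : ℝ) (w : ℕ → ℝ) : Prop :=
  (∀ n, 0 < w n) ∧
  ∃ A : ℝ, ∀ n m : ℕ, n ≤ m →
    (∑ k ∈ Finset.Icc n m, w k) *
      (∑ k ∈ Finset.Icc n m, w k ^ (-(1 / (p - 1)))) ^ (p - 1) ≤
      A * ((m : ℝ) - (n : ℝ) + 1) ^ p

/-- Discrete Muckenhoupt class `A_1(ℕ)`. -/
def IsDiscreteA1 (w : ℕ → ℝ) : Prop :=
  (∀ n, 0 < w n) ∧
  ∃ A : ℝ, ∀ n m k : ℕ, n ≤ k → k ≤ m →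
    (∑ j ∈ Finset.Icc n m, w j) * (w k)⁻¹ ≤ A * ((m : ℝ) - (n : ℝ) + 1)

/-- Eigenvalues of the Jacobi differential operator. -/
noncomputable def jacobiLam (a b : ℝ) (n : ℕ) : ℝ := ((n : ℝ) + (a + b + 1) / 2) ^ 2

/-- The potential `W_{γ,δ}^{α,β}`. -/
noncomputable def jacobiW (α β γ δ : ℝ) (x : ℝ) : ℝ :=
  (γ ^ 2 - α ^ 2) / (4 * Real.sin (x / 2) ^ 2) + (δ ^ 2 - β ^ 2) / (4 * Real.cos (x / 2) ^ 2)

/-- The bilinear form `U(f,g) = f g' - g f'`. -/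
noncomputable def jacobiU (f g : ℝ → ℝ) (x : ℝ) : ℝ := f x * deriv g x - g x * deriv f x

/-- `S(n,m)`: boundary terms. -/
noncomputable def jacobiS (α β γ δ : ℝ) (n m : ℕ) : ℝ :=
  jacobiU (jacobiFn γ δ n) (jacobiFn α β m) (Real.pi - 1 / ((n : ℝ) + 1)) -
    jacobiU (jacobiFn γ δ n) (jacobiFn α β m) (1 / ((n : ℝ) + 1))

/-- `J(n,m)`. -/
noncomputable def jacobiJ (α β γ δ : ℝ) (n m : ℕ) : ℝ :=
  ∫ x in (1 / ((n : ℝ) + 1))..(Real.pi - 1 / ((n : ℝ) + 1)),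
    jacobiW α β γ δ x * jacobiFn γ δ n x * jacobiFn α β m x

/-- Jacobi coefficients of a function on `(0, π)`. -/
noncomputable def jacobiCoeff (a b : ℝ) (n : ℕ) (F : ℝ → ℝ) : ℝ :=
  ∫ x in (0 : ℝ)..Real.pi, F x * jacobiFn a b n x

/-- Continuous Muckenhoupt class `A_q(0,π)`. -/
def IsContinuousAq (q : ℝ) (v : ℝ → ℝ) : Prop :=
  (∀ x ∈ Set.Ioo 0 Real.pi, 0 < v x) ∧
  ∃ A : ℝ, ∀ r s : ℝ, 0 < r → r ≤ s → s < Real.pi →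
    (∫ x in r..s, v x) * (∫ x in r..s, v x ^ (-(1 / (q - 1)))) ^ (q - 1) ≤ A * (s - r) ^ q

/-- Membership in the weighted space `L^q_v(0,π)`. -/
def MemLqv (q : ℝ) (v : ℝ → ℝ) (F : ℝ → ℝ) : Prop :=
  Measurable F ∧ IntegrableOn (fun x => |F x| ^ q * v x) (Set.Ioo 0 Real.pi)

/-!
The sample points `d * k + c`, `n ≤ k ≤ m`, of a window lie in the window `[d * n + c, d * m + c]`,
which is at most `d` times as long. Both sums in the Muckenhoupt characteristic only grow when
passing to the larger window, so the `A_p` constant of the subsampled weight is at most `d ^ p`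
times that of `w`.
-/

open Finset

theorem StrictMono.sum_Icc_comp_le {φ : ℕ → ℕ} (hφ : StrictMono φ) {f : ℕ → ℝ}
    (hf : ∀ j, 0 ≤ f j) (n m : ℕ) :
    ∑ k ∈ Icc n m, f (φ k) ≤ ∑ j ∈ Icc (φ n) (φ m), f j := by
  rw [← sum_image fun a _ b _ h => hφ.injective h]
  refine sum_le_sum_of_subset_of_nonneg ?_ fun j _ _ => hf j
  intro j hj
  obtain ⟨k, hk, rfl⟩ := mem_image.1 hj
  rw [mem_Icc] at hk ⊢
  exact ⟨hφ.monotone hk.1, hφ.monotone hk.2⟩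

theorem strictMono_mul_add {d : ℕ} (hd : 0 < d) (c : ℕ) : StrictMono fun k => d * k + c :=
  fun _ _ h => Nat.add_lt_add_right (Nat.mul_lt_mul_of_pos_left h hd) c

theorem window_length_mul_add_bounds {d : ℕ} (hd : 0 < d) (c : ℕ) {n m : ℕ} (hnm : n ≤ m) :
    0 ≤ ((d * m + c : ℕ) : ℝ) - ((d * n + c : ℕ) : ℝ) + 1 ∧
      ((d * m + c : ℕ) : ℝ) - ((d * n + c : ℕ) : ℝ) + 1 ≤ d * ((m : ℝ) - n + 1) := by
  have hd : (1 : ℝ) ≤ d := by exact_mod_cast hd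
  have hnm : (n : ℝ) ≤ m := by exact_mod_cast hnm
  push_cast
  constructor <;> nlinarith

theorem IsDiscreteA1.comp_mul_add {w : ℕ → ℝ} (hw : IsDiscreteA1 w) {d : ℕ} (hd : 0 < d) (c : ℕ) :
    IsDiscreteA1 fun n => w (d * n + c) := by
  obtain ⟨hpos, A, hA⟩ := hw
  have hφ := strictMono_mul_add hd c
  refine ⟨fun n => hpos _, max A 0 * d, fun n m k hnk hkm => ?_⟩
  obtain ⟨hℓ₀, hℓ⟩ := window_length_mul_add_bounds hd c (hnk.trans hkm)
  calc (∑ j ∈ Icc n m, w (d * j + c)) * (w (d * k + c))⁻¹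
      ≤ (∑ j ∈ Icc (d * n + c) (d * m + c), w j) * (w (d * k + c))⁻¹ := by
        gcongr
        · exact inv_nonneg.2 (hpos _).le
        · exact hφ.sum_Icc_comp_le (fun j => (hpos j).le) n m
    _ ≤ A * (((d * m + c : ℕ) : ℝ) - ((d * n + c : ℕ) : ℝ) + 1) :=
        hA _ _ _ (hφ.monotone hnk) (hφ.monotone hkm)
    _ ≤ max A 0 * (d * ((m : ℝ) - n + 1)) :=
        mul_le_mul (le_max_left A 0) hℓ hℓ₀ (le_max_right A 0)
    _ = max A 0 * d * ((m : ℝ) - n + 1) := by ring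

theorem IsDiscreteAp.comp_mul_add {p : ℝ} (hp : 1 ≤ p) {w : ℕ → ℝ} (hw : IsDiscreteAp p w)
    {d : ℕ} (hd : 0 < d) (c : ℕ) : IsDiscreteAp p fun n => w (d * n + c) := by
  obtain ⟨hpos, A, hA⟩ := hw
  have hφ := strictMono_mul_add hd c
  refine ⟨fun n => hpos _, max A 0 * d ^ p, fun n m hnm => ?_⟩
  obtain ⟨hℓ₀, hℓ⟩ := window_length_mul_add_bounds hd c hnm
  have hw₀ (j : ℕ) : 0 ≤ w j := (hpos j).le
  have hw'₀ (j : ℕ) : 0 ≤ w j ^ (-(1 / (p - 1))) := Real.rpow_nonneg (hw₀ j) _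
  calc (∑ k ∈ Icc n m, w (d * k + c)) *
        (∑ k ∈ Icc n m, w (d * k + c) ^ (-(1 / (p - 1)))) ^ (p - 1)
      ≤ (∑ j ∈ Icc (d * n + c) (d * m + c), w j) *
        (∑ j ∈ Icc (d * n + c) (d * m + c), w j ^ (-(1 / (p - 1)))) ^ (p - 1) :=
        mul_le_mul (hφ.sum_Icc_comp_le hw₀ n m)
          (Real.rpow_le_rpow (sum_nonneg fun _ _ => hw'₀ _) (hφ.sum_Icc_comp_le hw'₀ n m)
            (by linarith))
          (Real.rpow_nonneg (sum_nonneg fun _ _ => hw'₀ _) _) (sum_nonneg fun _ _ => hw₀ _)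
    _ ≤ A * (((d * m + c : ℕ) : ℝ) - ((d * n + c : ℕ) : ℝ) + 1) ^ p :=
        hA _ _ (hφ.monotone hnm)
    _ ≤ max A 0 * (d * ((m : ℝ) - n + 1)) ^ p := by
        gcongr
        exact le_max_left A 0
    _ = max A 0 * d ^ p * ((m : ℝ) - n + 1) ^ p := by
        have : (n : ℝ) ≤ m := by exact_mod_cast hnm
        rw [Real.mul_rpow (Nat.cast_nonneg d) (by linarith)]
        ring

theorem discrete_Ap_subsampled_general (p : ℝ) (w : ℕ → ℝ)
    (hw : (p = 1 ∧ IsDiscreteA1 w) ∨ (1 < p ∧ IsDiscreteAp p w)) :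
    ((p = 1 ∧ IsDiscreteA1 (fun n => w (2 * n))) ∨
        (1 < p ∧ IsDiscreteAp p (fun n => w (2 * n)))) ∧
      ((p = 1 ∧ IsDiscreteA1 (fun n => w (2 * n + 1))) ∨
        (1 < p ∧ IsDiscreteAp p (fun n => w (2 * n + 1)))) := by
  have subsample (c : ℕ) : (p = 1 ∧ IsDiscreteA1 fun n => w (2 * n + c)) ∨
      (1 < p ∧ IsDiscreteAp p fun n => w (2 * n + c)) :=
    hw.imp (fun ⟨hp, h⟩ => ⟨hp, h.comp_mul_add two_pos c⟩)
      (fun ⟨hp, h⟩ => ⟨hp, h.comp_mul_add hp.le two_pos c⟩)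
  exact ⟨by simpa using subsample 0, subsample 1⟩

/-- Even and odd subsampled weights of a discrete `A_p` weight are again `A_p` weights. -/
theorem discrete_Ap_subsampled (p : ℝ) (hp : 1 ≤ p) (w : ℕ → ℝ)
    (hw : (p = 1 ∧ IsDiscreteA1 w) ∨ (1 < p ∧ IsDiscreteAp p w)) :
    ((p = 1 ∧ IsDiscreteA1 (fun n => w (2 * n))) ∨
        (1 < p ∧ IsDiscreteAp p (fun n => w (2 * n)))) ∧
      ((p = 1 ∧ IsDiscreteA1 (fun n => w (2 * n + 1))) ∨
        (1 < p ∧ IsDiscreteAp p (fun n => w (2 * n + 1)))) :=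
  discrete_Ap_subsampled_general p w hw
end

section
/- Let α, β, γ, δ ≥ −1/2 and let n, m ∈ ℕ be such that λ_n^{(γ,δ)} ≠ λ_m^{(α,β)}, where λ_k^{(a,b)} = (k + (a+b+1)/2)². Then ∫_{1/(n+1)}^{π−1/(n+1)} p_n^{(γ,δ)}(x) p_m^{(α,β)}(x) dx = (S(n,m) + J(n,m)) / (λ_n^{(γ,δ)} − λ_m^{(α,β)}). -/
open Real MeasureTheory

/-! Rodrigues' formula and the substitution `z = cos x` turn the Jacobi equation satisfied by
`ρ⁽ⁿ⁾`, `ρ(t) = (1 - t) ^ (a + n) (1 + t) ^ (b + n)`, into `u'' + 2 h u' + q u = 0` for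
`u = ρ⁽ⁿ⁾ ∘ cos`. The Liouville weight `w = sin (x/2) ^ (1/2 - a) cos (x/2) ^ (1/2 - b)`, with
`w' = h w`, removes the first-order term: `p_n^{(a,b)}` solves `φ'' = (V_{a,b} - λ_n^{(a,b)}) φ`
on `(0, π)`, where `V_{a,b}(x) = (a² - 1/4) / (4 sin² (x/2)) + (b² - 1/4) / (4 cos² (x/2))`.
For two such solutions the Wronskian `U(f, g)` has derivative `(λ_f - λ_g) f g - (V_f - V_g) f g`,
and `W_{γ,δ}^{α,β} = V_{γ,δ} - V_{α,β}`; integrate over `[1/(n+1), π - 1/(n+1)]`. -/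

open Set Topology
open scoped ContDiff

theorem ContDiffAt.hasDerivAt_iteratedDeriv {f : ℝ → ℝ} {z : ℝ} (hf : ContDiffAt ℝ ∞ f z)
    (k : ℕ) : HasDerivAt (iteratedDeriv k f) (iteratedDeriv (k + 1) f z) z := by
  rw [iteratedDeriv_succ]
  exact ((hf.differentiableAt_iteratedFDeriv (by exact_mod_cast WithTop.coe_lt_top _)
    ).continuousMultilinear_apply_const (fun _ => 1)).hasDerivAt

theorem iteratedDeriv_recurrence_succ {f : ℝ → ℝ} {s : Set ℝ} (hs : IsOpen s)
    (hf : ∀ z ∈ s, ContDiffAt ℝ ∞ f z) {P Q R : ℝ} {k j : ℕ}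
    (h : ∀ z ∈ s, (1 - z ^ 2) * iteratedDeriv (k + 1) f z =
      (P + Q * z) * iteratedDeriv k f z + R * iteratedDeriv j f z) :
    ∀ z ∈ s, (1 - z ^ 2) * iteratedDeriv (k + 2) f z =
      (P + (Q + 2) * z) * iteratedDeriv (k + 1) f z + Q * iteratedDeriv k f z +
        R * iteratedDeriv (j + 1) f z := by
  intro z hz
  have hderiv (i : ℕ) := (hf z hz).hasDerivAt_iteratedDeriv i
  have hlhs : HasDerivAt (fun x => (1 - x ^ 2) * iteratedDeriv (k + 1) f x) _ z :=
    ((hasDerivAt_pow 2 z).const_sub 1).mul (hderiv (k + 1))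
  have hrhs : HasDerivAt
      (fun x => (P + Q * x) * iteratedDeriv k f x + R * iteratedDeriv j f x) _ z :=
    ((((hasDerivAt_id z).const_mul Q).const_add P).mul (hderiv k)).add ((hderiv j).const_mul R)
  have heq := (Filter.eventuallyEq_of_mem (hs.mem_nhds hz) h).deriv_eq
  rw [hlhs.deriv, hrhs.deriv] at heq
  simp only [id] at heq
  linear_combination heq

noncomputable def rodriguesWeight (p q t : ℝ) : ℝ := (1 - t) ^ p * (1 + t) ^ q

section RodriguesWeight

variable (p q : ℝ)

theorem contDiffAt_rodriguesWeight {t : ℝ} (ht : t ∈ Ioo (-1 : ℝ) 1) :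
    ContDiffAt ℝ ∞ (rodriguesWeight p q) t :=
  ((contDiffAt_const.sub contDiffAt_id).rpow_const_of_ne (by simp; linarith [ht.2])).mul
    ((contDiffAt_const.add contDiffAt_id).rpow_const_of_ne (by simp; linarith [ht.1]))

theorem rodriguesWeight_deriv_eq {t : ℝ} (ht : t ∈ Ioo (-1 : ℝ) 1) :
    (1 - t ^ 2) * deriv (rodriguesWeight p q) t =
      (q - p - (p + q) * t) * rodriguesWeight p q t := by
  have h1 : 0 < 1 - t := by linarith [ht.2]
  have h2 : 0 < 1 + t := by linarith [ht.1]
  have hd : HasDerivAt (rodriguesWeight p q) _ t :=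
    (((hasDerivAt_id t).const_sub 1).rpow_const (p := p) (Or.inl h1.ne')).mul
      (((hasDerivAt_id t).const_add 1).rpow_const (p := q) (Or.inl h2.ne'))
  rw [hd.deriv]
  simp only [id, rodriguesWeight, rpow_sub_one h1.ne', rpow_sub_one h2.ne']
  field_simp
  ring

theorem rodriguesWeight_iteratedDeriv_recurrence (k : ℕ) :
    ∀ t ∈ Ioo (-1 : ℝ) 1, (1 - t ^ 2) * iteratedDeriv (k + 2) (rodriguesWeight p q) t =
      (q - p + (2 * (k + 1) - (p + q)) * t) * iteratedDeriv (k + 1) (rodriguesWeight p q) t +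
        (k + 1) * (k - (p + q)) * iteratedDeriv k (rodriguesWeight p q) t := by
  have hρ : ∀ t ∈ Ioo (-1 : ℝ) 1, ContDiffAt ℝ ∞ (rodriguesWeight p q) t :=
    fun t ht => contDiffAt_rodriguesWeight p q ht
  induction k with
  | zero =>
    have base : ∀ t ∈ Ioo (-1 : ℝ) 1, (1 - t ^ 2) * iteratedDeriv (0 + 1) (rodriguesWeight p q) t =
        (q - p + (-(p + q)) * t) * iteratedDeriv 0 (rodriguesWeight p q) t +
          0 * iteratedDeriv 0 (rodriguesWeight p q) t := fun t ht => by
      rw [zero_add, iteratedDeriv_one, iteratedDeriv_zero]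
      linear_combination rodriguesWeight_deriv_eq p q ht
    intro t ht
    push_cast
    linear_combination iteratedDeriv_recurrence_succ isOpen_Ioo hρ base t ht
  | succ k ih =>
    intro t ht
    push_cast
    linear_combination iteratedDeriv_recurrence_succ isOpen_Ioo hρ ih t ht

end RodriguesWeight

section Liouville

variable {w h u u' : ℝ → ℝ} {x : ℝ}

theorem hasDerivAt_mul_of_logDeriv (hw : HasDerivAt w (w x * h x) x)
    (hu : HasDerivAt u (u' x) x) :
    HasDerivAt (fun y => w y * u y) (w x * (h x * u x + u' x)) x :=
  (hw.mul hu).congr_deriv (by ring)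

/-- Liouville normal form: `w (h u + u')` is `(w u)'`, so this reads
`(w u)'' = (h ^ 2 + h' - q) w u` for `w' = h w` and `u'' + 2 h u' + q u = 0`. -/
theorem hasDerivAt_liouville {h' q : ℝ} (hw : HasDerivAt w (w x * h x) x)
    (hh : HasDerivAt h h' x) (hu : HasDerivAt u (u' x) x)
    (hu' : HasDerivAt u' (-(2 * h x) * u' x - q * u x) x) :
    HasDerivAt (fun y => w y * (h y * u y + u' y)) ((h x ^ 2 + h' - q) * (w x * u x)) x :=
  (hw.mul ((hh.mul hu).add hu')).congr_deriv (by simp only [Pi.add_apply, Pi.mul_apply]; ring)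

end Liouville

section HalfAngle

variable {x : ℝ}

theorem sin_half_pos_of_mem_Ioo (hx : x ∈ Ioo 0 π) : 0 < sin (x / 2) :=
  sin_pos_of_pos_of_lt_pi (by linarith [hx.1]) (by linarith [hx.2, pi_pos])

theorem cos_half_pos_of_mem_Ioo (hx : x ∈ Ioo 0 π) : 0 < cos (x / 2) :=
  cos_pos_of_mem_Ioo ⟨by linarith [hx.1, pi_pos], by linarith [hx.2]⟩

theorem sin_eq_two_mul_sin_half_mul_cos_half (x : ℝ) :
    sin x = 2 * sin (x / 2) * cos (x / 2) := by
  rw [← sin_two_mul]; ring_nf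

theorem cos_eq_cos_half_sq_sub_sin_half_sq (x : ℝ) :
    cos x = cos (x / 2) ^ 2 - sin (x / 2) ^ 2 := by
  rw [← cos_two_mul']; ring_nf

theorem cos_mem_Ioo_of_mem_Ioo (hx : x ∈ Ioo 0 π) : cos x ∈ Ioo (-1 : ℝ) 1 := by
  have hs := sin_half_pos_of_mem_Ioo hx
  have hc := cos_half_pos_of_mem_Ioo hx
  have hsc := sin_sq_add_cos_sq (x / 2)
  rw [cos_eq_cos_half_sq_sub_sin_half_sq]
  constructor <;> nlinarith

theorem two_mul_sq_rpow_neg_mul_rpow {s : ℝ} (hs : 0 < s) (a : ℝ) :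
    (2 * s ^ 2) ^ (-a) * s ^ (a + 1 / 2) = (2 : ℝ) ^ (-a) * s ^ (1 / 2 - a) := by
  rw [mul_rpow (by norm_num) (by positivity), ← rpow_natCast, ← rpow_mul hs.le, mul_assoc,
    ← rpow_add hs]
  congr 2
  push_cast
  ring

theorem hasDerivAt_sin_half : HasDerivAt (fun y => sin (y / 2)) (cos (x / 2) / 2) x :=
  ((hasDerivAt_id' x).div_const 2).sin.congr_deriv (by ring)

theorem hasDerivAt_cos_half : HasDerivAt (fun y => cos (y / 2)) (-sin (x / 2) / 2) x :=
  ((hasDerivAt_id' x).div_const 2).cos.congr_deriv (by ring)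

end HalfAngle

noncomputable def jacobiLiouvilleWeight (a b x : ℝ) : ℝ :=
  sin (x / 2) ^ (1 / 2 - a) * cos (x / 2) ^ (1 / 2 - b)

noncomputable def jacobiLiouvilleLogDeriv (a b x : ℝ) : ℝ :=
  (1 / 2 - a) / 2 * (cos (x / 2) / sin (x / 2)) - (1 / 2 - b) / 2 * (sin (x / 2) / cos (x / 2))

noncomputable def jacobiPotential (a b x : ℝ) : ℝ :=
  (a ^ 2 - 1 / 4) / (4 * sin (x / 2) ^ 2) + (b ^ 2 - 1 / 4) / (4 * cos (x / 2) ^ 2)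

noncomputable def jacobiConst (a b : ℝ) (n : ℕ) : ℝ :=
  jacobiw a b n * ((-1 : ℝ) ^ n / ((2 : ℝ) ^ n * (Nat.factorial n : ℝ))) * (2 : ℝ) ^ (-a) *
    (2 : ℝ) ^ (-b)

section JacobiFn

variable (a b : ℝ) (n : ℕ) {x : ℝ}

theorem hasDerivAt_jacobiLiouvilleWeight (hx : x ∈ Ioo 0 π) :
    HasDerivAt (jacobiLiouvilleWeight a b)
      (jacobiLiouvilleWeight a b x * jacobiLiouvilleLogDeriv a b x) x := by
  have hs := sin_half_pos_of_mem_Ioo hx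
  have hc := cos_half_pos_of_mem_Ioo hx
  have hd : HasDerivAt (jacobiLiouvilleWeight a b) _ x :=
    (hasDerivAt_sin_half.rpow_const (p := 1 / 2 - a) (Or.inl hs.ne')).mul
      (hasDerivAt_cos_half.rpow_const (p := 1 / 2 - b) (Or.inl hc.ne'))
  refine hd.congr_deriv ?_
  simp only [jacobiLiouvilleWeight, jacobiLiouvilleLogDeriv, rpow_sub_one hs.ne',
    rpow_sub_one hc.ne']
  field_simp
  ring

theorem hasDerivAt_jacobiLiouvilleLogDeriv (hx : x ∈ Ioo 0 π) :
    HasDerivAt (jacobiLiouvilleLogDeriv a b)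
      (-(1 / 2 - a) / (4 * sin (x / 2) ^ 2) - (1 / 2 - b) / (4 * cos (x / 2) ^ 2)) x := by
  have hs := sin_half_pos_of_mem_Ioo hx
  have hc := cos_half_pos_of_mem_Ioo hx
  have hd : HasDerivAt (jacobiLiouvilleLogDeriv a b) _ x :=
    (((hasDerivAt_cos_half.div hasDerivAt_sin_half hs.ne').const_mul ((1 / 2 - a) / 2)).sub
      ((hasDerivAt_sin_half.div hasDerivAt_cos_half hc.ne').const_mul ((1 / 2 - b) / 2)))
  refine hd.congr_deriv ?_
  have hsc := sin_sq_add_cos_sq (x / 2)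
  have e₁ : -sin (x / 2) / 2 * sin (x / 2) - cos (x / 2) * (cos (x / 2) / 2) = -1 / 2 := by
    linear_combination (-1 / 2) * hsc
  have e₂ : cos (x / 2) / 2 * cos (x / 2) - sin (x / 2) * (-sin (x / 2) / 2) = 1 / 2 := by
    linear_combination (1 / 2) * hsc
  rw [e₁, e₂]
  ring

theorem two_mul_jacobiLiouvilleLogDeriv_mul_sin (hx : x ∈ Ioo 0 π) :
    2 * jacobiLiouvilleLogDeriv a b x * sin x = b - a + (1 - a - b) * cos x := by
  have hs := sin_half_pos_of_mem_Ioo hx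
  have hc := cos_half_pos_of_mem_Ioo hx
  rw [jacobiLiouvilleLogDeriv, sin_eq_two_mul_sin_half_mul_cos_half x,
    cos_eq_cos_half_sq_sub_sin_half_sq x]
  field_simp
  linear_combination (b - a) * sin_sq_add_cos_sq (x / 2)

theorem jacobiLiouvilleLogDeriv_sq_add_deriv_sub (hx : x ∈ Ioo 0 π) :
    jacobiLiouvilleLogDeriv a b x ^ 2 +
        (-(1 / 2 - a) / (4 * sin (x / 2) ^ 2) - (1 / 2 - b) / (4 * cos (x / 2) ^ 2)) -
        (n + 1) * (n + a + b) =
      jacobiPotential a b x - jacobiLam a b n := by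
  have hs := sin_half_pos_of_mem_Ioo hx
  have hc := cos_half_pos_of_mem_Ioo hx
  rw [jacobiLiouvilleLogDeriv, jacobiPotential, jacobiLam]
  field_simp
  linear_combination (64 * (a ^ 2 - a) * cos (x / 2) ^ 2 + 64 * (b ^ 2 - b) * sin (x / 2) ^ 2 +
    16 * (sin (x / 2) ^ 2 + cos (x / 2) ^ 2)) * sin_sq_add_cos_sq (x / 2)

/-- Since `1 - cos x = 2 sin² (x/2)` and `1 + cos x = 2 cos² (x/2)`, the factor
`(1 - cos x) ^ (-a) (1 + cos x) ^ (-b)` of Rodrigues' formula merges with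
`sin (x/2) ^ (a + 1/2) cos (x/2) ^ (b + 1/2)` into the Liouville weight. -/
theorem jacobiFn_eq_of_mem_Ioo (hx : x ∈ Ioo 0 π) :
    jacobiFn a b n x = jacobiConst a b n * (jacobiLiouvilleWeight a b x *
      iteratedDeriv n (rodriguesWeight (a + n) (b + n)) (cos x)) := by
  have hs := sin_half_pos_of_mem_Ioo hx
  have hc := cos_half_pos_of_mem_Ioo hx
  have hcos := cos_eq_cos_half_sq_sub_sin_half_sq x
  have hsc := sin_sq_add_cos_sq (x / 2)
  have hsin_rpow : (1 - cos x) ^ (-a) * sin (x / 2) ^ (a + 1 / 2) =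
      (2 : ℝ) ^ (-a) * sin (x / 2) ^ (1 / 2 - a) := by
    rw [show 1 - cos x = 2 * sin (x / 2) ^ 2 by linear_combination -hcos - hsc,
      two_mul_sq_rpow_neg_mul_rpow hs]
  have hcos_rpow : (1 + cos x) ^ (-b) * cos (x / 2) ^ (b + 1 / 2) =
      (2 : ℝ) ^ (-b) * cos (x / 2) ^ (1 / 2 - b) := by
    rw [show 1 + cos x = 2 * cos (x / 2) ^ 2 by linear_combination hcos - hsc,
      two_mul_sq_rpow_neg_mul_rpow hc]
  have hweight : (1 - cos x) ^ (-a) * (1 + cos x) ^ (-b) *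
      (sin (x / 2) ^ (a + 1 / 2) * cos (x / 2) ^ (b + 1 / 2)) =
      (2 : ℝ) ^ (-a) * (2 : ℝ) ^ (-b) * jacobiLiouvilleWeight a b x := by
    rw [mul_mul_mul_comm, hsin_rpow, hcos_rpow, jacobiLiouvilleWeight]
    ring
  simp only [jacobiFn, jacobiP, jacobiConst]
  rw [show (fun t : ℝ => (1 - t) ^ (a + (n : ℝ)) * (1 + t) ^ (b + (n : ℝ))) =
    rodriguesWeight (a + n) (b + n) from rfl]
  linear_combination (jacobiw a b n * ((-1 : ℝ) ^ n / ((2 : ℝ) ^ n * (Nat.factorial n : ℝ))) *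
    iteratedDeriv n (rodriguesWeight (a + n) (b + n)) (cos x)) * hweight

theorem hasDerivAt_iteratedDeriv_rodriguesWeight_cos (p q : ℝ) (k : ℕ) (hx : x ∈ Ioo 0 π) :
    HasDerivAt (fun y => iteratedDeriv k (rodriguesWeight p q) (cos y))
      (-sin x * iteratedDeriv (k + 1) (rodriguesWeight p q) (cos x)) x :=
  (((contDiffAt_rodriguesWeight p q (cos_mem_Ioo_of_mem_Ioo hx)).hasDerivAt_iteratedDeriv
    k).comp x (hasDerivAt_cos x)).congr_deriv (by ring)

/-- The Jacobi equation `u'' + 2 h u' + q u = 0` for `u = ρ⁽ⁿ⁾ ∘ cos`, whose derivative is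
`u' = -sin · ρ⁽ⁿ⁺¹⁾ ∘ cos`. -/
theorem hasDerivAt_deriv_iteratedDeriv_rodriguesWeight_cos (hx : x ∈ Ioo 0 π) :
    HasDerivAt (fun y => -sin y * iteratedDeriv (n + 1) (rodriguesWeight (a + n) (b + n)) (cos y))
      (-(2 * jacobiLiouvilleLogDeriv a b x) *
          (-sin x * iteratedDeriv (n + 1) (rodriguesWeight (a + n) (b + n)) (cos x)) -
        (n + 1) * (n + a + b) * iteratedDeriv n (rodriguesWeight (a + n) (b + n)) (cos x)) x := by
  have hode := rodriguesWeight_iteratedDeriv_recurrence (a + n) (b + n) n (cos x)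
    (cos_mem_Ioo_of_mem_Ioo hx)
  refine ((hasDerivAt_sin x).neg.mul
    (hasDerivAt_iteratedDeriv_rodriguesWeight_cos (a + n) (b + n) (n + 1) hx)).congr_deriv ?_
  simp only [Pi.neg_apply]
  linear_combination hode -
    iteratedDeriv (n + 1) (rodriguesWeight (a + n) (b + n)) (cos x) *
      two_mul_jacobiLiouvilleLogDeriv_mul_sin a b hx +
    iteratedDeriv (n + 2) (rodriguesWeight (a + n) (b + n)) (cos x) * sin_sq_add_cos_sq x

theorem hasDerivAt_jacobiFn (hx : x ∈ Ioo 0 π) :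
    HasDerivAt (jacobiFn a b n) (jacobiConst a b n * (jacobiLiouvilleWeight a b x *
      (jacobiLiouvilleLogDeriv a b x * iteratedDeriv n (rodriguesWeight (a + n) (b + n)) (cos x) +
        -sin x * iteratedDeriv (n + 1) (rodriguesWeight (a + n) (b + n)) (cos x)))) x := by
  have heq : jacobiFn a b n =ᶠ[𝓝 x] _ :=
    Filter.eventuallyEq_of_mem (isOpen_Ioo.mem_nhds hx) fun y hy => jacobiFn_eq_of_mem_Ioo a b n hy
  exact ((hasDerivAt_mul_of_logDeriv (hasDerivAt_jacobiLiouvilleWeight a b hx)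
    (u' := fun y => -sin y * iteratedDeriv (n + 1) (rodriguesWeight (a + n) (b + n)) (cos y))
    (hasDerivAt_iteratedDeriv_rodriguesWeight_cos _ _ n hx)).const_mul _).congr_of_eventuallyEq heq

theorem hasDerivAt_deriv_jacobiFn (hx : x ∈ Ioo 0 π) :
    HasDerivAt (deriv (jacobiFn a b n))
      ((jacobiPotential a b x - jacobiLam a b n) * jacobiFn a b n x) x := by
  have heq : deriv (jacobiFn a b n) =ᶠ[𝓝 x] _ :=
    Filter.eventuallyEq_of_mem (isOpen_Ioo.mem_nhds hx)
      fun y hy => (hasDerivAt_jacobiFn a b n hy).deriv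
  refine (((hasDerivAt_liouville (hasDerivAt_jacobiLiouvilleWeight a b hx)
    (hasDerivAt_jacobiLiouvilleLogDeriv a b hx)
    (u' := fun y => -sin y * iteratedDeriv (n + 1) (rodriguesWeight (a + n) (b + n)) (cos y))
    (hasDerivAt_iteratedDeriv_rodriguesWeight_cos _ _ n hx)
    (hasDerivAt_deriv_iteratedDeriv_rodriguesWeight_cos a b n hx)).const_mul
      (jacobiConst a b n)).congr_of_eventuallyEq heq).congr_deriv ?_
  rw [jacobiLiouvilleLogDeriv_sq_add_deriv_sub a b n hx, jacobiFn_eq_of_mem_Ioo a b n hx]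
  ring

theorem jacobiW_eq_sub (α β γ δ : ℝ) :
    jacobiW α β γ δ = fun x => jacobiPotential γ δ x - jacobiPotential α β x := by
  ext x
  simp only [jacobiW, jacobiPotential]
  ring

theorem continuousOn_jacobiPotential : ContinuousOn (jacobiPotential a b) (Ioo 0 π) := by
  refine ContinuousOn.add ?_ ?_ <;> refine continuousOn_const.div (by fun_prop) fun x hx => ?_
  · exact (mul_pos four_pos (pow_pos (sin_half_pos_of_mem_Ioo hx) 2)).ne'
  · exact (mul_pos four_pos (pow_pos (cos_half_pos_of_mem_Ioo hx) 2)).ne'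

end JacobiFn

theorem integral_mul_eq_of_hasDerivAt_deriv {f g V W : ℝ → ℝ} {E F r R : ℝ} (hrR : r ≤ R)
    (hf : ∀ x ∈ Icc r R, DifferentiableAt ℝ f x) (hg : ∀ x ∈ Icc r R, DifferentiableAt ℝ g x)
    (hf' : ∀ x ∈ Icc r R, HasDerivAt (deriv f) ((V x - E) * f x) x)
    (hg' : ∀ x ∈ Icc r R, HasDerivAt (deriv g) ((W x - F) * g x) x)
    (hV : ContinuousOn V (Icc r R)) (hW : ContinuousOn W (Icc r R)) (hEF : E ≠ F) :
    ∫ x in r..R, f x * g x =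
      (jacobiU f g R - jacobiU f g r + ∫ x in r..R, (V x - W x) * f x * g x) / (E - F) := by
  have hfc : ContinuousOn f (Icc r R) := fun x hx => (hf x hx).continuousAt.continuousWithinAt
  have hgc : ContinuousOn g (Icc r R) := fun x hx => (hg x hx).continuousAt.continuousWithinAt
  have hfg : IntervalIntegrable (fun x => f x * g x) volume r R :=
    (hfc.mul hgc).intervalIntegrable_of_Icc hrR
  have hVWfg : IntervalIntegrable (fun x => (V x - W x) * f x * g x) volume r R :=
    (((hV.sub hW).mul hfc).mul hgc).intervalIntegrable_of_Icc hrR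
  have hU : ∀ x ∈ uIcc r R, HasDerivAt (jacobiU f g)
      ((E - F) * (f x * g x) - (V x - W x) * f x * g x) x := by
    intro x hx
    rw [uIcc_of_le hrR] at hx
    exact (((hf x hx).hasDerivAt.mul (hg' x hx)).sub
      ((hg x hx).hasDerivAt.mul (hf' x hx))).congr_deriv (by ring)
  have hftc := intervalIntegral.integral_eq_sub_of_hasDerivAt hU ((hfg.const_mul _).sub hVWfg)
  rw [intervalIntegral.integral_sub (hfg.const_mul _) hVWfg,
    intervalIntegral.integral_const_mul] at hftc
  rw [eq_div_iff (sub_ne_zero.mpr hEF)]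
  linarith

theorem jacobiK_middle_representation_general (α β γ δ : ℝ)
    (n m : ℕ) (hlam : jacobiLam γ δ n ≠ jacobiLam α β m) :
    ∫ x in (1 / ((n : ℝ) + 1))..(Real.pi - 1 / ((n : ℝ) + 1)),
        jacobiFn γ δ n x * jacobiFn α β m x =
      (jacobiS α β γ δ n m + jacobiJ α β γ δ n m) /
        (jacobiLam γ δ n - jacobiLam α β m) := by
  have hr : 0 < 1 / ((n : ℝ) + 1) := by positivity
  have hr₁ : 1 / ((n : ℝ) + 1) ≤ 1 := div_le_one_of_le₀ (by simp) (by positivity)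
  have hrR : 1 / ((n : ℝ) + 1) ≤ π - 1 / ((n : ℝ) + 1) := by linarith [pi_gt_three]
  have hsub : Icc (1 / ((n : ℝ) + 1)) (π - 1 / ((n : ℝ) + 1)) ⊆ Ioo 0 π :=
    fun x hx => ⟨by linarith [hx.1], by linarith [hx.2]⟩
  rw [jacobiS, jacobiJ, jacobiW_eq_sub]
  exact integral_mul_eq_of_hasDerivAt_deriv hrR
    (fun x hx => (hasDerivAt_jacobiFn γ δ n (hsub hx)).differentiableAt)
    (fun x hx => (hasDerivAt_jacobiFn α β m (hsub hx)).differentiableAt)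
    (fun x hx => hasDerivAt_deriv_jacobiFn γ δ n (hsub hx))
    (fun x hx => hasDerivAt_deriv_jacobiFn α β m (hsub hx))
    ((continuousOn_jacobiPotential γ δ).mono hsub) ((continuousOn_jacobiPotential α β).mono hsub)
    hlam

/-- Representation of the truncated kernel integral via boundary and potential terms. -/
theorem jacobiK_middle_representation (α β γ δ : ℝ)
    (hα : -(1 / 2) ≤ α) (hβ : -(1 / 2) ≤ β) (hγ : -(1 / 2) ≤ γ) (hδ : -(1 / 2) ≤ δ)
    (n m : ℕ) (hlam : jacobiLam γ δ n ≠ jacobiLam α β m) :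
    ∫ x in (1 / ((n : ℝ) + 1))..(Real.pi - 1 / ((n : ℝ) + 1)),
        jacobiFn γ δ n x * jacobiFn α β m x =
      (jacobiS α β γ δ n m + jacobiJ α β γ δ n m) /
        (jacobiLam γ δ n - jacobiLam α β m) :=
  jacobiK_middle_representation_general α β γ δ n m hlam
end

section
/- Let a, b > −1. Then there exists a constant C such that for every n ∈ ℕ, |w_{n+2}^{(a,b)} / w_n^{(a,b)} − 1| ≤ C / (n+1). -/
open Real MeasureTheory

/-! For `n ≥ 1` the Gamma factors in `w_{n+2}² / w_n²` telescope to a product of five ratios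
`(n + p) / (n + q)`, each of which is `1 + O(1/n)`; products and square roots preserve this.
The finitely many remaining `n`, among them `n = 0` where `w_0` has its own formula, only
enlarge the constant. -/

open Asymptotics Filter Topology

theorem Real.abs_sqrt_sub_one_le (x : ℝ) : |√x - 1| ≤ |x - 1| := by
  rcases le_or_gt 0 x with hx | hx
  · have hfactor : x - 1 = (√x - 1) * (√x + 1) := by
      linear_combination -(Real.sq_sqrt hx)
    rw [hfactor, abs_mul, abs_of_pos (by positivity : 0 < √x + 1)]
    exact le_mul_of_one_le_right (abs_nonneg _) (by linarith [Real.sqrt_nonneg x])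
  · rw [Real.sqrt_eq_zero_of_nonpos hx.le, abs_of_neg (by linarith : x - 1 < 0)]
    norm_num
    linarith

section

variable {α : Type*} {l : Filter α} {g : α → ℝ}

theorem Asymptotics.IsBigO.sqrt_sub_one {u : α → ℝ} (h : (fun x => u x - 1) =O[l] g) :
    (fun x => √(u x) - 1) =O[l] g :=
  (isBigO_of_le l fun x => Real.abs_sqrt_sub_one_le (u x)).trans h

theorem Asymptotics.IsBigO.mul_sub_one {R : Type*} [NormedRing R] {u v : α → R}
    (hu : (fun x => u x - 1) =O[l] g) (hv : (fun x => v x - 1) =O[l] g)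
    (hg : g =O[l] (fun _ => (1 : ℝ))) :
    (fun x => u x * v x - 1) =O[l] g := by
  have hsplit : (fun x => u x * v x - 1) =
      fun x => (u x - 1) * (v x - 1) + (u x - 1) + (v x - 1) := by
    funext x; noncomm_ring
  have hgg : (fun x => g x * g x) =O[l] g := by
    simpa only [mul_one] using (isBigO_refl g l).mul hg
  rw [hsplit]
  exact (((hu.mul hv).trans hgg).add hu).add hv

end

theorem isBigO_natCast_add_div_natCast_add_sub_one (p q : ℝ) :
    (fun n : ℕ => ((n : ℝ) + p) / (n + q) - 1) =O[atTop] (fun n : ℕ => ((n : ℝ) + 1)⁻¹) := by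
  refine isBigO_of_div_tendsto_nhds (.of_forall fun n h => absurd h (by positivity))
    ((p - q) / 1) ?_
  refine (tendsto_add_mul_div_add_mul_atTop_nhds (p - q) q (p - q) one_ne_zero).congr' ?_
  filter_upwards [(tendsto_atTop_add_const_left _ q tendsto_natCast_atTop_atTop).eventually_ne_atTop 0]
    with n hn
  have : (n : ℝ) + q ≠ 0 := by rwa [add_comm]
  simp only [Pi.div_apply, one_mul]
  field_simp
  ring

theorem Real.Gamma_add_two {y : ℝ} (hy : 0 < y) : Gamma (y + 2) = (y + 1) * y * Gamma y := by
  rw [show y + 2 = y + 1 + 1 by ring, Real.Gamma_add_one (by positivity),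
    Real.Gamma_add_one hy.ne', mul_assoc]

theorem jacobiw_add_two_div {a b : ℝ} (ha : -1 < a) (hb : -1 < b) {n : ℕ} (hn : n ≠ 0) :
    jacobiw a b (n + 2) / jacobiw a b n =
      √(((n : ℝ) + (a + b + 5) / 2) / (n + (a + b + 1) / 2) * ((n + 1) / (n + (a + 1))) *
        ((n + 2) / (n + (a + 2))) * ((n + (a + b + 1)) / (n + (b + 1))) *
        ((n + (a + b + 2)) / (n + (b + 2)))) := by
  have hx : (1 : ℝ) ≤ n := Nat.one_le_cast.2 (Nat.pos_of_ne_zero hn)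
  have hΓ₁ := Real.Gamma_pos_of_pos (by linarith : (0 : ℝ) < n + 1)
  have hΓab := Real.Gamma_pos_of_pos (by linarith : (0 : ℝ) < n + a + b + 1)
  have hΓa := Real.Gamma_pos_of_pos (by linarith : (0 : ℝ) < n + a + 1)
  have hΓb := Real.Gamma_pos_of_pos (by linarith : (0 : ℝ) < n + b + 1)
  have hc : (0 : ℝ) < 2 * n + a + b + 1 := by linarith
  rw [jacobiw, jacobiw, if_neg (by omega), if_neg hn, ← Real.sqrt_div' _ (by positivity)]
  congr 1
  push_cast
  rw [show (n : ℝ) + 2 + 1 = n + 1 + 2 by ring, Real.Gamma_add_two (by linarith),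
    show (n : ℝ) + 2 + a + b + 1 = n + a + b + 1 + 2 by ring, Real.Gamma_add_two (by linarith),
    show (n : ℝ) + 2 + a + 1 = n + a + 1 + 2 by ring, Real.Gamma_add_two (by linarith),
    show (n : ℝ) + 2 + b + 1 = n + b + 1 + 2 by ring, Real.Gamma_add_two (by linarith)]
  generalize Gamma (n + 1) = G₁ at *
  generalize Gamma (n + a + b + 1) = Gab at *
  generalize Gamma (n + a + 1) = Ga at *
  generalize Gamma (n + b + 1) = Gb at *
  have : (n : ℝ) + (a + 1) ≠ 0 := by linarith
  have : (n : ℝ) + (a + 2) ≠ 0 := by linarith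
  have : (n : ℝ) + (b + 1) ≠ 0 := by linarith
  have : (n : ℝ) + (b + 2) ≠ 0 := by linarith
  have : (n : ℝ) + (a + b + 1) / 2 ≠ 0 := by linarith
  have : (n : ℝ) + a + 1 ≠ 0 := by linarith
  have : (n : ℝ) + a + 1 + 1 ≠ 0 := by linarith
  have : (n : ℝ) + b + 1 ≠ 0 := by linarith
  have : (n : ℝ) + b + 1 + 1 ≠ 0 := by linarith
  rw [show (2 * n + a + b + 1 : ℝ) = 2 * (n + (a + b + 1) / 2) by ring]
  field_simp
  ring

theorem isBigO_jacobiw_add_two_div_sub_one {a b : ℝ} (ha : -1 < a) (hb : -1 < b) :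
    (fun n : ℕ => jacobiw a b (n + 2) / jacobiw a b n - 1) =O[atTop]
      (fun n : ℕ => ((n : ℝ) + 1)⁻¹) := by
  have hg : (fun n : ℕ => ((n : ℝ) + 1)⁻¹) =O[atTop] (fun _ => (1 : ℝ)) := by
    simpa only [one_div] using (tendsto_one_div_add_atTop_nhds_zero_nat (𝕜 := ℝ)).isBigO_one ℝ
  have hfactor := isBigO_natCast_add_div_natCast_add_sub_one
  refine IsBigO.congr' (IsBigO.sqrt_sub_one <|
    ((((hfactor ((a + b + 5) / 2) ((a + b + 1) / 2)).mul_sub_one (hfactor 1 (a + 1)) hg).mul_sub_one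
      (hfactor 2 (a + 2)) hg).mul_sub_one (hfactor (a + b + 1) (b + 1)) hg).mul_sub_one
        (hfactor (a + b + 2) (b + 2)) hg) ?_ .rfl
  filter_upwards [eventually_ne_atTop 0] with n hn
  rw [jacobiw_add_two_div ha hb hn]

/-- Asymptotics of the ratio of normalization constants. -/
theorem jacobiw_ratio_bound (a b : ℝ) (ha : -1 < a) (hb : -1 < b) :
    ∃ C : ℝ, ∀ n : ℕ,
      |jacobiw a b (n + 2) / jacobiw a b n - 1| ≤ C / ((n : ℝ) + 1) := by
  obtain ⟨C, hC⟩ := (isBigO_nat_atTop_iff fun n h => absurd h (by positivity)).1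
    (isBigO_jacobiw_add_two_div_sub_one ha hb)
  refine ⟨C, fun n => ?_⟩
  simpa [abs_of_pos (by positivity : (0 : ℝ) < n + 1), div_eq_mul_inv] using hC n
end

section
/- Let α, β, γ, δ ≥ −1/2. Then there exists a constant C such that for all n, m ∈ ℕ with n > m and n ≥ 1, |∫_0^{1/(n+1)} p_n^{(γ,δ)}(x) p_m^{(α,β)}(x) dx| ≤ C / n. -/
open Real MeasureTheory

/-!
On `0 < x ≤ 1 / (k + 1)` the normalized Jacobi functions are bounded uniformly in `k`, so the
integral over `[0, 1 / (n + 1)]` is `O(1 / n)`.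

For the uniform bound, Leibniz' rule in Rodrigues' formula expands `P_k^{(a,b)}(z)` into terms
carrying `(1 - z) ^ j`. Near `z = 1`, where `(k + 1) ^ 2 (1 - z) ≤ 1`, the `j`-th term is at most
`(a + 1)_k / k! · D ^ j / j!` with `D = 1 + |b|`, so `|P_k^{(a,b)}(cos x)| ≤ e ^ D (a + 1)_k / k!`. The log-convexity
of `Γ` (Wendel's inequality) gives `w_k (a + 1)_k / k! = O(k ^ (a + 1/2))`, and this growth is
cancelled by `sin (x / 2) ^ (a + 1/2) ≤ (k + 1) ^ (-(a + 1/2))`.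
-/

open Polynomial Finset
open scoped Nat

namespace Real

/-- Wendel's inequality. -/
theorem Gamma_add_le_Gamma_mul_rpow {c x : ℝ} (hc₀ : 0 ≤ c) (hc₁ : c ≤ 1) (hx : 0 < x) :
    Gamma (x + c) ≤ Gamma x * x ^ c := by
  have hΓ := Gamma_pos_of_pos hx
  have hconv := convexOn_log_Gamma.2 (Set.mem_Ioi.2 hx) (Set.mem_Ioi.2 (by linarith : 0 < x + 1))
    (by linarith : 0 ≤ 1 - c) hc₀ (by ring)
  rw [show (1 - c) • x + c • (x + 1) = x + c by simp only [smul_eq_mul]; ring] at hconv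
  simp only [Function.comp_apply, smul_eq_mul, Gamma_add_one hx.ne',
    log_mul hx.ne' hΓ.ne'] at hconv
  rw [← exp_log (Gamma_pos_of_pos (by linarith : 0 < x + c)), rpow_def_of_pos hx,
    ← exp_log hΓ, ← exp_add]
  exact exp_le_exp.2 (by linarith)

theorem Gamma_add_le_pow_mul_rpow_mul_Gamma (n : ℕ) {c x : ℝ} (hc₀ : 0 ≤ c) (hcn : c ≤ n + 1)
    (hx : 1 ≤ x) : Gamma (x + c) ≤ (1 + c) ^ n * x ^ c * Gamma x := by
  induction n generalizing c with
  | zero =>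
    rw [pow_zero, one_mul, mul_comm]
    exact Gamma_add_le_Gamma_mul_rpow hc₀ (by simpa using hcn) (by linarith)
  | succ n ih =>
    have hx₀ : 0 < x := by linarith
    have hΓ := (Gamma_pos_of_pos hx₀).le
    rcases le_or_gt c (n + 1) with hc | hc
    · calc Gamma (x + c) ≤ (1 + c) ^ n * x ^ c * Gamma x := ih hc₀ hc
        _ ≤ (1 + c) ^ (n + 1) * x ^ c * Gamma x := by
          gcongr
          · linarith
          · omega
    · have hc₁ : 1 ≤ c := by linarith [(Nat.cast_nonneg n : (0 : ℝ) ≤ n)]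
      have hrec : Gamma (x + c) = (x + (c - 1)) * Gamma (x + (c - 1)) := by
        rw [← Gamma_add_one (by linarith)]; ring_nf
      have hpow : x ^ c = x * x ^ (c - 1) := by
        rw [← rpow_one_add' hx₀.le (by linarith)]; ring_nf
      calc Gamma (x + c) = (x + (c - 1)) * Gamma (x + (c - 1)) := hrec
        _ ≤ ((1 + c) * x) * ((1 + (c - 1)) ^ n * x ^ (c - 1) * Gamma x) := by
          gcongr
          · nlinarith
          · exact ih (by linarith) (by push_cast at hcn; linarith)
        _ ≤ ((1 + c) * x) * ((1 + c) ^ n * x ^ (c - 1) * Gamma x) := by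
          gcongr; linarith
        _ = (1 + c) ^ (n + 1) * x ^ c * Gamma x := by rw [hpow]; ring

theorem exists_Gamma_add_le {c : ℝ} (hc : -1 ≤ c) :
    ∃ C, 0 < C ∧ ∀ x, 3 / 2 ≤ x → Gamma (x + c) ≤ C * x ^ c * Gamma x := by
  rcases le_or_gt 0 c with hc₀ | hc₀
  · obtain ⟨n, hn⟩ := exists_nat_ge c
    exact ⟨(1 + c) ^ n, by positivity, fun x hx =>
      Gamma_add_le_pow_mul_rpow_mul_Gamma n hc₀ (by linarith) (by linarith)⟩
  · -- `Γ (x + c) ≤ Γ (x - 1) (x - 1) ^ (1 + c) = Γ x (x - 1) ^ c` and `x / 3 ≤ x - 1`.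
    refine ⟨3 ^ (-c), by positivity, fun x hx => ?_⟩
    have hx₁ : 0 < x - 1 := by linarith
    have hwendel := Gamma_add_le_Gamma_mul_rpow (c := 1 + c) (by linarith) (by linarith) hx₁
    rw [show x - 1 + (1 + c) = x + c by ring, rpow_add hx₁, rpow_one] at hwendel
    have hrec : Gamma x = (x - 1) * Gamma (x - 1) := by
      rw [← Gamma_add_one hx₁.ne', sub_add_cancel]
    have hshift : (x - 1) ^ c ≤ 3 ^ (-c) * x ^ c := by
      calc (x - 1) ^ c ≤ (x / 3) ^ c := rpow_le_rpow_of_nonpos (by positivity) (by linarith) hc₀.le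
        _ = 3 ^ (-c) * x ^ c := by
          rw [div_eq_inv_mul, mul_rpow (by norm_num) (by linarith), inv_rpow (by norm_num),
            rpow_neg (by norm_num)]
    calc Gamma (x + c) ≤ Gamma x * (x - 1) ^ c := by rw [hrec]; linarith
      _ ≤ Gamma x * (3 ^ (-c) * x ^ c) := by gcongr
      _ = 3 ^ (-c) * x ^ c * Gamma x := by ring

theorem exists_rpow_add_le {s : ℝ} (hs : -(1 / 2) ≤ s) (c : ℝ) :
    ∃ C, 0 < C ∧ ∀ u, 1 ≤ u → (u + s) ^ c ≤ C * u ^ c := by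
  rcases le_or_gt 0 c with hc | hc
  · refine ⟨(1 + |s|) ^ c, by positivity, fun u hu => ?_⟩
    rw [← mul_rpow (by positivity) (by linarith)]
    exact rpow_le_rpow (by linarith) (by nlinarith [le_abs_self s, abs_nonneg s]) hc
  · refine ⟨2 ^ (-c), by positivity, fun u hu => ?_⟩
    calc (u + s) ^ c ≤ (u / 2) ^ c := rpow_le_rpow_of_nonpos (by positivity) (by linarith) hc.le
      _ = 2 ^ (-c) * u ^ c := by
        rw [div_eq_inv_mul, mul_rpow (by norm_num) (by linarith), inv_rpow (by norm_num),
          rpow_neg (by norm_num)]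

theorem exists_Gamma_natCast_add_div_le {s c : ℝ} (hs : -(1 / 2) ≤ s) (hc : -1 ≤ c) :
    ∃ C, 0 < C ∧ ∀ k : ℕ, 1 ≤ k →
      Gamma (k + c + s + 1) / Gamma (k + s + 1) ≤ C * ((k : ℝ) + 1) ^ c := by
  obtain ⟨C₁, hC₁, hGamma⟩ := exists_Gamma_add_le hc
  obtain ⟨C₂, hC₂, hshift⟩ := exists_rpow_add_le hs c
  refine ⟨C₁ * C₂, by positivity, fun k hk => ?_⟩
  have hk' : (1 : ℝ) ≤ k := by exact_mod_cast hk
  have hΓ := Gamma_pos_of_pos (by linarith : (0 : ℝ) < k + s + 1)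
  have hpow := hshift ((k : ℝ) + 1) (by linarith)
  rw [add_right_comm] at hpow
  rw [div_le_iff₀ hΓ, show (k : ℝ) + c + s + 1 = k + s + 1 + c by ring]
  calc Gamma (k + s + 1 + c) ≤ C₁ * (k + s + 1) ^ c * Gamma (k + s + 1) := hGamma _ (by linarith)
    _ ≤ C₁ * (C₂ * ((k : ℝ) + 1) ^ c) * Gamma (k + s + 1) := by gcongr
    _ = C₁ * C₂ * ((k : ℝ) + 1) ^ c * Gamma (k + s + 1) := by ring

end Real

theorem ascPochhammer_eval_mul_Gamma {s : ℝ} (hs : 0 < s) (k : ℕ) :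
    (ascPochhammer ℝ k).eval s * Gamma s = Gamma (s + k) := by
  induction k with
  | zero => simp
  | succ k ih =>
    rw [ascPochhammer_succ_eval, mul_right_comm, ih, Nat.cast_succ, ← add_assoc,
      Gamma_add_one (by positivity), mul_comm]

theorem factorial_div_two_pow_le_ascPochhammer_eval {s : ℝ} (hs : 1 / 2 ≤ s) (j : ℕ) :
    (j ! : ℝ) / 2 ^ j ≤ (ascPochhammer ℝ j).eval s := by
  induction j with
  | zero => simp
  | succ j ih =>
    calc ((j + 1)! : ℝ) / 2 ^ (j + 1) = (j ! / 2 ^ j) * ((j + 1) / 2) := by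
          push_cast [Nat.factorial_succ]; ring
      _ ≤ (ascPochhammer ℝ j).eval s * (s + j) :=
          mul_le_mul ih (by linarith) (by linarith [(Nat.cast_nonneg j : (0 : ℝ) ≤ j)])
            ((by positivity : (0 : ℝ) ≤ j ! / 2 ^ j).trans ih)
      _ = (ascPochhammer ℝ (j + 1)).eval s := (ascPochhammer_succ_eval j s).symm

theorem descPochhammer_eval_le_pow {s : ℝ} {j : ℕ} (hs : (j : ℝ) - 1 ≤ s) :
    (descPochhammer ℝ j).eval s ≤ s ^ j := by
  induction j with
  | zero => simp
  | succ j ih =>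
    push_cast at hs
    have hj : (0 : ℝ) ≤ j := Nat.cast_nonneg j
    rw [descPochhammer_succ_eval, pow_succ]
    exact mul_le_mul (ih (by linarith)) (by linarith) (by linarith) (pow_nonneg (by linarith) j)

theorem descPochhammer_eval_mul_ascPochhammer_eval {R : Type*} [CommRing R] (s : R) {i k : ℕ}
    (h : i ≤ k) :
    (descPochhammer R i).eval (s + k) * (ascPochhammer R (k - i)).eval (s + 1) =
      (ascPochhammer R k).eval (s + 1) := by
  have hasc {m : ℕ} {t : R} (ht : t - m + 1 = s + 1) :
      (descPochhammer R m).eval t = (ascPochhammer R m).eval (s + 1) := by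
    rw [descPochhammer_eval_eq_ascPochhammer, ht]
  calc (descPochhammer R i).eval (s + k) * (ascPochhammer R (k - i)).eval (s + 1)
      = (descPochhammer R i).eval (s + k) * (descPochhammer R (k - i)).eval (s + k - i) := by
        rw [hasc (m := k - i) (t := s + k - i) (by push_cast [Nat.cast_sub h]; ring)]
    _ = (descPochhammer R (i + (k - i))).eval (s + k) := by
        rw [← descPochhammer_mul]; simp
    _ = (ascPochhammer R k).eval (s + 1) := by rw [Nat.add_sub_cancel' h, hasc (by ring)]

theorem descPochhammer_eval_le_ascPochhammer_eval_mul {a : ℝ} (ha : -(1 / 2) ≤ a) {i k : ℕ}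
    (hik : i ≤ k) :
    (descPochhammer ℝ i).eval (a + k) ≤
      (ascPochhammer ℝ k).eval (a + 1) * 2 ^ (k - i) / (k - i)! := by
  have hlow := factorial_div_two_pow_le_ascPochhammer_eval (s := a + 1) (by linarith) (k - i)
  have hA₀ : 0 ≤ (descPochhammer ℝ i).eval (a + k) :=
    descPochhammer_nonneg (by linarith [(Nat.cast_le.2 hik : (i : ℝ) ≤ k)])
  rw [← descPochhammer_eval_mul_ascPochhammer_eval a hik, mul_assoc, mul_div_assoc]
  refine le_mul_of_one_le_right hA₀ ?_
  rwa [le_div_iff₀ (by positivity), one_mul, ← div_le_iff₀ (by positivity)]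

theorem iteratedDeriv_one_sub_rpow (A t : ℝ) (i : ℕ) :
    iteratedDeriv i (fun t : ℝ => (1 - t) ^ A) t =
      (-1) ^ i * (descPochhammer ℝ i).eval A * (1 - t) ^ (A - i) := by
  have h := congrFun (iteratedDeriv_comp_const_sub i (fun x : ℝ => x ^ A) 1) t
  rw [h, iteratedDeriv_eq_iterate, iter_deriv_rpow_const, smul_eq_mul, mul_assoc]

theorem iteratedDeriv_one_add_rpow (B t : ℝ) (i : ℕ) :
    iteratedDeriv i (fun t : ℝ => (1 + t) ^ B) t =
      (descPochhammer ℝ i).eval B * (1 + t) ^ (B - i) := by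
  have h := congrFun (iteratedDeriv_comp_const_add i (fun x : ℝ => x ^ B) 1) t
  rw [h, iteratedDeriv_eq_iterate, iter_deriv_rpow_const]

/-- The `i`-th Leibniz term of the Rodrigues formula for `P_k^{(a,b)}`, without its sign. -/
noncomputable def rodriguesTerm (a b : ℝ) (k i : ℕ) (z : ℝ) : ℝ :=
  k.choose i * (descPochhammer ℝ i).eval (a + k) * (descPochhammer ℝ (k - i)).eval (b + k) *
    (1 - z) ^ (k - i) * (1 + z) ^ i

theorem jacobiP_eq_sum_rodriguesTerm (a b : ℝ) (k : ℕ) {z : ℝ} (hz : z ∈ Set.Ioo (-1) 1) :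
    jacobiP a b k z = (-1) ^ k / (2 ^ k * k !) *
      ∑ i ∈ range (k + 1), (-1) ^ i * rodriguesTerm a b k i z := by
  have h₁ : 0 < 1 - z := by linarith [hz.2]
  have h₂ : 0 < 1 + z := by linarith [hz.1]
  have hsmooth {c : ℝ} {f : ℝ → ℝ} (hf : ContDiffAt ℝ k f z) (hfz : f z ≠ 0) :
      ContDiffAt ℝ k (fun t => f t ^ c) z := hf.rpow_const_of_ne hfz
  rw [jacobiP, iteratedDeriv_fun_mul (hsmooth (by fun_prop) h₁.ne') (hsmooth (by fun_prop) h₂.ne'),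
    mul_assoc, mul_assoc, mul_sum, mul_sum]
  refine congrArg _ (sum_congr rfl fun i hi => ?_)
  have hik : i ≤ k := Nat.lt_succ_iff.1 (mem_range.1 hi)
  have e₁ : (1 - z) ^ (-a) * (1 - z) ^ (a + k - i) = (1 - z) ^ (k - i) := by
    rw [← rpow_add h₁, ← rpow_natCast, Nat.cast_sub hik]; ring_nf
  have e₂ : (1 + z) ^ (-b) * (1 + z) ^ (b + k - ↑(k - i)) = (1 + z) ^ i := by
    rw [← rpow_add h₂, ← rpow_natCast, Nat.cast_sub hik]; ring_nf
  rw [iteratedDeriv_one_sub_rpow, iteratedDeriv_one_add_rpow, rodriguesTerm, ← e₁, ← e₂]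
  ring

theorem natCast_mul_add_mul_one_sub_mem_Icc {b z : ℝ} (hb : -1 ≤ b) {k : ℕ} (hz : z ≤ 1)
    (hzk : ((k : ℝ) + 1) ^ 2 * (1 - z) ≤ 1) :
    (k : ℝ) * (b + k) * (1 - z) ∈ Set.Icc 0 (1 + |b|) := by
  have hk₀ : (0 : ℝ) ≤ k := Nat.cast_nonneg k
  constructor
  · rcases Nat.eq_zero_or_pos k with rfl | hk
    · simp
    · have : (1 : ℝ) ≤ k := by exact_mod_cast hk
      have : 0 ≤ b + k := by linarith
      have : 0 ≤ 1 - z := by linarith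
      positivity
  · have : (k : ℝ) * (b + k) ≤ (1 + |b|) * ((k : ℝ) + 1) ^ 2 := by
      nlinarith [mul_le_mul_of_nonneg_left (le_abs_self b) hk₀,
        mul_nonneg (abs_nonneg b) (sq_nonneg (k : ℝ)), mul_nonneg (abs_nonneg b) hk₀, abs_nonneg b]
    nlinarith [abs_nonneg b]

theorem abs_rodriguesTerm_le {a b z : ℝ} (ha : -(1 / 2) ≤ a) (hb : -1 ≤ b) {k i : ℕ}
    (hik : i ≤ k) (hz : z ∈ Set.Ioo (-1) 1) (hzk : ((k : ℝ) + 1) ^ 2 * (1 - z) ≤ 1) :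
    |rodriguesTerm a b k i z| ≤
      2 ^ k * (ascPochhammer ℝ k).eval (a + 1) * (1 + |b|) ^ (k - i) / (k - i)! := by
  set j := k - i with hj
  have h₁ : 0 ≤ 1 - z := by linarith [hz.2]
  have h₂ : 0 ≤ 1 + z := by linarith [hz.1]
  have hA₀ : 0 ≤ (descPochhammer ℝ i).eval (a + k) :=
    descPochhammer_nonneg (by linarith [(Nat.cast_le.2 hik : (i : ℝ) ≤ k)])
  have hjk : (j : ℝ) ≤ k := Nat.cast_le.2 (Nat.sub_le k i)
  have hB₀ : 0 ≤ (descPochhammer ℝ j).eval (b + k) := descPochhammer_nonneg (by linarith)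
  have hasc₀ : 0 ≤ (ascPochhammer ℝ k).eval (a + 1) := (ascPochhammer_pos k _ (by linarith)).le
  have hchooseA : (k.choose i : ℝ) * (descPochhammer ℝ i).eval (a + k) ≤
      (k ^ j / j !) * ((ascPochhammer ℝ k).eval (a + 1) * 2 ^ j / j !) := by
    refine mul_le_mul ?_ (descPochhammer_eval_le_ascPochhammer_eval_mul ha hik) hA₀ (by positivity)
    rw [← Nat.choose_symm hik]
    exact Nat.choose_le_pow_div j k
  have hBz : (descPochhammer ℝ j).eval (b + k) * (1 - z) ^ j ≤ (b + k) ^ j * (1 - z) ^ j :=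
    mul_le_mul_of_nonneg_right (descPochhammer_eval_le_pow (by linarith)) (by positivity)
  have hchooseA₀ := (mul_nonneg (by positivity) hA₀).trans hchooseA
  have hBz₀ := (mul_nonneg hB₀ (by positivity)).trans hBz
  obtain ⟨hD₀, hD⟩ := natCast_mul_add_mul_one_sub_mem_Icc hb hz.2.le hzk
  calc |rodriguesTerm a b k i z|
      = (k.choose i * (descPochhammer ℝ i).eval (a + k)) *
          ((descPochhammer ℝ j).eval (b + k) * (1 - z) ^ j) * (1 + z) ^ i := by
        rw [abs_of_nonneg (by rw [rodriguesTerm]; positivity), rodriguesTerm]; ring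
    _ ≤ (k ^ j / j !) * ((ascPochhammer ℝ k).eval (a + 1) * 2 ^ j / j !) *
          ((b + k) ^ j * (1 - z) ^ j) * 2 ^ i :=
        mul_le_mul (mul_le_mul hchooseA hBz (by positivity) hchooseA₀)
          (pow_le_pow_left₀ h₂ (by linarith [hz.2]) i) (by positivity) (mul_nonneg hchooseA₀ hBz₀)
    _ = 2 ^ k * (ascPochhammer ℝ k).eval (a + 1) * (k * (b + k) * (1 - z)) ^ j / (j ! * j !) := by
        rw [show (2 : ℝ) ^ k = 2 ^ j * 2 ^ i by rw [← pow_add, hj, Nat.sub_add_cancel hik],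
          mul_pow, mul_pow]
        ring
    _ ≤ 2 ^ k * (ascPochhammer ℝ k).eval (a + 1) * (1 + |b|) ^ j / j ! := by
        rw [mul_div_assoc, mul_div_assoc]
        refine mul_le_mul_of_nonneg_left ?_ (mul_nonneg (by positivity) hasc₀)
        exact div_le_div₀ (by positivity) (pow_le_pow_left₀ hD₀ hD j) (by positivity)
          (le_mul_of_one_le_right (Nat.cast_nonneg _) (Nat.one_le_cast.2 j.factorial_pos))

theorem abs_jacobiP_le {a b z : ℝ} (ha : -(1 / 2) ≤ a) (hb : -1 ≤ b) (k : ℕ)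
    (hz : z ∈ Set.Ioo (-1) 1) (hzk : ((k : ℝ) + 1) ^ 2 * (1 - z) ≤ 1) :
    |jacobiP a b k z| ≤ (ascPochhammer ℝ k).eval (a + 1) / k ! * exp (1 + |b|) := by
  have hasc₀ : 0 ≤ (ascPochhammer ℝ k).eval (a + 1) := (ascPochhammer_pos k _ (by linarith)).le
  rw [jacobiP_eq_sum_rodriguesTerm a b k hz, abs_mul, abs_div, abs_pow, abs_neg, abs_one, one_pow,
    abs_of_pos (by positivity)]
  calc 1 / (2 ^ k * k !) * |∑ i ∈ range (k + 1), (-1) ^ i * rodriguesTerm a b k i z|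
      ≤ 1 / (2 ^ k * k !) * ∑ i ∈ range (k + 1),
          2 ^ k * (ascPochhammer ℝ k).eval (a + 1) * (1 + |b|) ^ (k - i) / (k - i)! := by
        gcongr
        refine (abs_sum_le_sum_abs _ _).trans (sum_le_sum fun i hi => ?_)
        rw [abs_mul, abs_pow, abs_neg, abs_one, one_pow, one_mul]
        exact abs_rodriguesTerm_le ha hb (Nat.lt_succ_iff.1 (mem_range.1 hi)) hz hzk
    _ = (ascPochhammer ℝ k).eval (a + 1) / k ! * ∑ j ∈ range (k + 1), (1 + |b|) ^ j / j ! := by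
        rw [← sum_range_reflect (fun j => (1 + |b|) ^ j / j !) (k + 1), mul_sum, mul_sum]
        refine sum_congr rfl fun i _ => ?_
        rw [add_tsub_cancel_right]
        field_simp
    _ ≤ (ascPochhammer ℝ k).eval (a + 1) / k ! * exp (1 + |b|) := by
        gcongr
        exact sum_le_exp_of_nonneg (by positivity) _

theorem abs_jacobiP_cos_le {a b x : ℝ} (ha : -(1 / 2) ≤ a) (hb : -1 ≤ b) {k : ℕ} (hx₀ : 0 < x)
    (hxk : x ≤ 1 / ((k : ℝ) + 1)) :
    |jacobiP a b k (cos x)| ≤ (ascPochhammer ℝ k).eval (a + 1) / k ! * exp (1 + |b|) := by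
  have hk : (0 : ℝ) < k + 1 := by positivity
  have hkx : ((k : ℝ) + 1) * x ≤ 1 := by rwa [le_div_iff₀' hk] at hxk
  have hx₁ : x ≤ 1 := by nlinarith
  refine abs_jacobiP_le ha hb k ⟨?_, ?_⟩ ?_
  · linarith [cos_pos_of_mem_Ioo (x := x) ⟨by linarith [pi_gt_three], by linarith [pi_gt_three]⟩]
  · simpa using cos_lt_cos_of_nonneg_of_le_pi le_rfl (by linarith [pi_gt_three]) hx₀
  · have hkx₂ : (((k : ℝ) + 1) * x) ^ 2 ≤ 1 := pow_le_one₀ (by positivity) hkx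
    calc ((k : ℝ) + 1) ^ 2 * (1 - cos x) ≤ ((k : ℝ) + 1) ^ 2 * (x ^ 2 / 2) := by
          gcongr; linarith [one_sub_sq_div_two_le_cos (x := x)]
      _ ≤ 1 := by nlinarith

theorem jacobiw_nonneg (a b : ℝ) (k : ℕ) : 0 ≤ jacobiw a b k := by
  rw [jacobiw]; split_ifs <;> exact sqrt_nonneg _

theorem jacobiw_mul_sq {a b : ℝ} (ha : -1 < a) (hb : -1 < b) {k : ℕ} (hk : k ≠ 0) :
    (jacobiw a b k * ((ascPochhammer ℝ k).eval (a + 1) / k !)) ^ 2 =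
      (2 * k + a + b + 1) * (Gamma (k + a + b + 1) / Gamma (k + b + 1)) *
        (Gamma (k + a + 1) / Gamma (k + 1)) / Gamma (a + 1) ^ 2 := by
  have hk' : (1 : ℝ) ≤ k := by exact_mod_cast Nat.one_le_iff_ne_zero.2 hk
  have hasc := ascPochhammer_eval_mul_Gamma (s := a + 1) (by linarith) k
  have := Gamma_pos_of_pos (by linarith : (0 : ℝ) < k + a + b + 1)
  have := Gamma_pos_of_pos (by linarith : (0 : ℝ) < k + a + 1)
  have := Gamma_pos_of_pos (by linarith : (0 : ℝ) < k + b + 1)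
  have := Gamma_pos_of_pos (by linarith : (0 : ℝ) < k + 1)
  have hΓ := Gamma_pos_of_pos (by linarith : (0 : ℝ) < a + 1)
  have : (0 : ℝ) < 2 * k + a + b + 1 := by linarith
  rw [← eq_div_iff hΓ.ne', add_comm (a + 1), ← add_assoc] at hasc
  rw [jacobiw, if_neg hk, mul_pow, sq_sqrt (by positivity), hasc, ← Gamma_nat_eq_factorial]
  field_simp

theorem exists_jacobiw_mul_ascPochhammer_le {a b : ℝ} (ha : -(1 / 2) ≤ a) (hb : -(1 / 2) ≤ b) :
    ∃ C, ∀ k : ℕ, jacobiw a b k * ((ascPochhammer ℝ k).eval (a + 1) / k !) ≤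
      C * ((k : ℝ) + 1) ^ (a + 1 / 2) := by
  have ha₁ : -1 ≤ a := by linarith
  obtain ⟨C₁, hC₁, hΓa⟩ := exists_Gamma_natCast_add_div_le (s := 0) (by norm_num) ha₁
  obtain ⟨C₂, hC₂, hΓb⟩ := exists_Gamma_natCast_add_div_le hb ha₁
  simp only [add_zero] at hΓa
  set K := (a + b + 3) * C₂ * C₁ / Gamma (a + 1) ^ 2
  refine ⟨max (jacobiw a b 0) (sqrt K), fun k => ?_⟩
  rcases Nat.eq_zero_or_pos k with rfl | hk
  · simp
  have hk' : (1 : ℝ) ≤ k := by exact_mod_cast hk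
  have hw₀ := jacobiw_nonneg a b k
  have hasc₀ : 0 ≤ (ascPochhammer ℝ k).eval (a + 1) := (ascPochhammer_pos k _ (by linarith)).le
  have hK : 0 ≤ K := div_nonneg (mul_nonneg (mul_nonneg (by linarith) hC₂.le) hC₁.le) (sq_nonneg _)
  have hratio {x y : ℝ} (hx : 0 < x) (hy : 0 < y) : 0 ≤ Gamma x / Gamma y :=
    div_nonneg (Gamma_pos_of_pos hx).le (Gamma_pos_of_pos hy).le
  have hcoef : 2 * k + a + b + 1 ≤ (a + b + 3) * ((k : ℝ) + 1) := by nlinarith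
  have hsq : (((k : ℝ) + 1) ^ (a + 1 / 2)) ^ 2 = ((k : ℝ) + 1) * ((k + 1) ^ a * (k + 1) ^ a) := by
    rw [← rpow_natCast, ← rpow_mul (by positivity),
      show (a + 1 / 2) * ((2 : ℕ) : ℝ) = 1 + (a + a) by push_cast; ring,
      rpow_add (by positivity), rpow_add (by positivity), rpow_one]
  refine le_trans ?_ (mul_le_mul_of_nonneg_right (le_max_right _ _) (by positivity))
  rw [← pow_le_pow_iff_left₀ (by positivity) (by positivity) two_ne_zero,
    jacobiw_mul_sq (by linarith) (by linarith) hk.ne', mul_pow, sq_sqrt hK]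
  calc (2 * k + a + b + 1) * (Gamma (k + a + b + 1) / Gamma (k + b + 1)) *
        (Gamma (k + a + 1) / Gamma (k + 1)) / Gamma (a + 1) ^ 2
      ≤ ((a + b + 3) * (k + 1)) * (C₂ * (k + 1) ^ a) * (C₁ * (k + 1) ^ a) / Gamma (a + 1) ^ 2 := by
        have hΓb₀ := (hratio (by linarith) (by linarith)).trans (hΓb k hk)
        have : 0 ≤ (a + b + 3) * ((k : ℝ) + 1) := by nlinarith
        refine div_le_div_of_nonneg_right (mul_le_mul (mul_le_mul hcoef (hΓb k hk) ?_ ?_)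
          (hΓa k hk) ?_ (by positivity)) (sq_nonneg _)
        · exact hratio (by linarith) (by linarith)
        · linarith
        · exact hratio (by linarith) (by linarith)
    _ = K * (((k : ℝ) + 1) ^ (a + 1 / 2)) ^ 2 := by rw [hsq]; ring

theorem exists_abs_jacobiFn_le {a b : ℝ} (ha : -(1 / 2) ≤ a) (hb : -(1 / 2) ≤ b) :
    ∃ C, 0 ≤ C ∧ ∀ (k : ℕ) (x : ℝ), 0 < x → x ≤ 1 / ((k : ℝ) + 1) → |jacobiFn a b k x| ≤ C := by
  obtain ⟨C, hC⟩ := exists_jacobiw_mul_ascPochhammer_le ha hb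
  have hC₀ : 0 ≤ C := (jacobiw_nonneg a b 0).trans (by simpa using hC 0)
  refine ⟨C * exp (1 + |b|), by positivity, fun k x hx₀ hxk => ?_⟩
  have hk : (0 : ℝ) < k + 1 := by positivity
  have hx₁ : x ≤ 1 := hxk.trans ((div_le_one hk).2 (by simp))
  have hw₀ := jacobiw_nonneg a b k
  have hsin₀ : 0 < sin (x / 2) := sin_pos_of_pos_of_lt_pi (by linarith) (by linarith [pi_gt_three])
  have hcos₀ : 0 < cos (x / 2) :=
    cos_pos_of_mem_Ioo ⟨by linarith [pi_gt_three], by linarith [pi_gt_three]⟩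
  have hsin : sin (x / 2) ^ (a + 1 / 2) ≤ ((k : ℝ) + 1) ^ (-(a + 1 / 2)) := by
    rw [rpow_neg hk.le, ← inv_rpow hk.le, ← one_div]
    exact rpow_le_rpow hsin₀.le (by linarith [sin_le (by linarith : 0 ≤ x / 2)]) (by linarith)
  have hcos : cos (x / 2) ^ (b + 1 / 2) ≤ 1 := rpow_le_one hcos₀.le (cos_le_one _) (by linarith)
  have hP := abs_jacobiP_cos_le ha (b := b) (by linarith) hx₀ hxk
  calc |jacobiFn a b k x|
      = jacobiw a b k * sin (x / 2) ^ (a + 1 / 2) * cos (x / 2) ^ (b + 1 / 2) *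
          |jacobiP a b k (cos x)| := by
        rw [jacobiFn, abs_mul, abs_mul, abs_mul, abs_of_nonneg hw₀,
          abs_of_nonneg (rpow_nonneg hsin₀.le _), abs_of_nonneg (rpow_nonneg hcos₀.le _)]
    _ ≤ jacobiw a b k * ((k : ℝ) + 1) ^ (-(a + 1 / 2)) * 1 *
          ((ascPochhammer ℝ k).eval (a + 1) / k ! * exp (1 + |b|)) := by
        gcongr
    _ = jacobiw a b k * ((ascPochhammer ℝ k).eval (a + 1) / k !) *
          ((k : ℝ) + 1) ^ (-(a + 1 / 2)) * exp (1 + |b|) := by ring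
    _ ≤ C * ((k : ℝ) + 1) ^ (a + 1 / 2) * ((k : ℝ) + 1) ^ (-(a + 1 / 2)) * exp (1 + |b|) := by
        have := hC k
        gcongr
    _ = C * exp (1 + |b|) := by
        rw [mul_assoc C, ← rpow_add hk, add_neg_cancel, rpow_zero, mul_one]

/-- Bound for the kernel near the left endpoint. -/
theorem jacobiK_left_endpoint_bound (α β γ δ : ℝ)
    (hα : -(1 / 2) ≤ α) (hβ : -(1 / 2) ≤ β) (hγ : -(1 / 2) ≤ γ) (hδ : -(1 / 2) ≤ δ) :
    ∃ C : ℝ, ∀ n m : ℕ, m < n → 1 ≤ n →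
      |∫ x in (0 : ℝ)..(1 / ((n : ℝ) + 1)), jacobiFn γ δ n x * jacobiFn α β m x| ≤
        C / (n : ℝ) := by
  obtain ⟨C₁, hC₁, hn⟩ := exists_abs_jacobiFn_le hγ hδ
  obtain ⟨C₂, hC₂, hm⟩ := exists_abs_jacobiFn_le hα hβ
  refine ⟨C₁ * C₂, fun n m hmn hn₁ => ?_⟩
  have hbound : ∀ x ∈ Set.uIoc (0 : ℝ) (1 / ((n : ℝ) + 1)),
      ‖jacobiFn γ δ n x * jacobiFn α β m x‖ ≤ C₁ * C₂ := by
    intro x hx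
    rw [Set.uIoc_of_le (by positivity)] at hx
    have hxm : x ≤ 1 / ((m : ℝ) + 1) := hx.2.trans
      (one_div_le_one_div_of_le (by positivity) (by exact_mod_cast Nat.succ_le_succ hmn.le))
    rw [norm_mul, Real.norm_eq_abs, Real.norm_eq_abs]
    exact mul_le_mul (hn n x hx.1 hx.2) (hm m x hx.1 hxm) (abs_nonneg _) hC₁
  calc |∫ x in (0 : ℝ)..(1 / ((n : ℝ) + 1)), jacobiFn γ δ n x * jacobiFn α β m x|
      ≤ C₁ * C₂ * |1 / ((n : ℝ) + 1) - 0| :=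
        intervalIntegral.norm_integral_le_of_norm_le_const hbound
    _ ≤ C₁ * C₂ / n := by
        have hn' : (1 : ℝ) ≤ n := by exact_mod_cast hn₁
        rw [sub_zero, abs_of_pos (by positivity), mul_one_div]
        gcongr
        linarith
end
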